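/- Let γ > 0, p > 1 and ω > γ²/4. Then the explicit function φ_ω satisfies the Nehari identity K_ω(φ_ω) = 0 and the Pohozaev-type identity P(φ_ω) = 0. -/

import Mathlib

open MeasureTheory Set
open scoped ENNReal

noncomputable section

/-- Inverse hyperbolic tangent. -/
def artanh (x : ℝ) : ℝ := Real.log ((1 + x) / (1 - x)) / 2

/-- Squared `L²` norm of `v`. -/
def l2Sq (v : ℝ → ℂ) : ℝ := ∫ x : ℝ, ‖v x‖ ^ 2

/-- Squared `L²` norm of the derivative of `v`. -/
def gradSq (v : ℝ → ℂ) : ℝ := ∫ x : ℝ, ‖deriv v x‖ ^ 2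

/-- `∫ |v|^(p+1)`, i.e. `‖v‖_{L^{p+1}}^{p+1}`. -/
def lpPow (p : ℝ) (v : ℝ → ℂ) : ℝ := ∫ x : ℝ, ‖v x‖ ^ (p + 1)

/-- `v ∈ H¹(ℝ)`, expressed via its continuous representative: `v` is square
integrable, absolutely continuous with a.e. derivative `deriv v`, which is
square integrable. -/
def MemH1 (v : ℝ → ℂ) : Prop :=
  Continuous v ∧ MemLp v 2 volume ∧ MemLp (deriv v) 2 volume ∧
    ∀ x : ℝ, v x = v 0 + ∫ t in (0:ℝ)..x, deriv v t

/-- The energy functional `E`. -/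
def En (γ p : ℝ) (v : ℝ → ℂ) : ℝ :=
  gradSq v / 2 - γ / 2 * ‖v 0‖ ^ 2 - lpPow p v / (p + 1)

/-- The Nehari functional `K_ω`. -/
def Kfun (γ p ω : ℝ) (v : ℝ → ℂ) : ℝ :=
  gradSq v + ω * l2Sq v - γ * ‖v 0‖ ^ 2 - lpPow p v

/-- The virial functional `P`. -/
def Pfun (γ p : ℝ) (v : ℝ → ℂ) : ℝ :=
  gradSq v - γ / 2 * ‖v 0‖ ^ 2 - (p - 1) / (2 * (p + 1)) * lpPow p v

/-- The action functional `S_ω`. -/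
def Sfun (γ p ω : ℝ) (v : ℝ → ℂ) : ℝ := En γ p v + ω / 2 * l2Sq v

/-- The minimal action `d(ω)` on the Nehari manifold. -/
def dInf (γ p ω : ℝ) : ℝ :=
  sInf {s : ℝ | ∃ v : ℝ → ℂ, MemH1 v ∧ v ≠ 0 ∧ Kfun γ p ω v = 0 ∧ s = Sfun γ p ω v}

/-- The explicit standing wave profile `φ_ω`. -/
def phi (γ p ω : ℝ) (x : ℝ) : ℝ :=
  ((p + 1) * ω / 2 *
      (1 / Real.cosh ((p - 1) * Real.sqrt ω / 2 * |x| + artanh (γ / (2 * Real.sqrt ω)))) ^ 2)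
    ^ (1 / (p - 1))

/-- `φ_ω` as a complex valued function. -/
def phiC (γ p ω : ℝ) : ℝ → ℂ := fun x => (phi γ p ω x : ℂ)

/-- The `L²`-invariant scaling `v^λ(x) = λ^{1/2} v(λ x)`. -/
def scale (l : ℝ) (v : ℝ → ℂ) : ℝ → ℂ := fun x => (Real.sqrt l : ℂ) * v (l * x)

/-- The set `𝓑_ω`. -/
def inB (γ p ω : ℝ) (v : ℝ → ℂ) : Prop :=
  MemH1 v ∧ 0 < En γ p v ∧ En γ p v < En γ p (phiC γ p ω) ∧
    l2Sq v = l2Sq (phiC γ p ω) ∧ Pfun γ p v < 0 ∧ Kfun γ p ω v < 0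

/-! On `[0, ∞)` the profile is `ψ = (A sech² u)^{1/(p-1)}` with `A = (p+1)ω/2` and
`u = (p-1)√ω x / 2 + artanh (γ / (2√ω))`, so that `φ_ω x = ψ |x|`. It solves `ψ'' = ωψ - ψ^p`
with the first integral `ψ'² = ωψ² - 2/(p+1) ψ^{p+1}`, decays like `exp (-√ω x)`, and the
choice of the shift gives the jump condition `ψ'(0) = -(γ/2) ψ(0)`. Integrating
`(ψψ')' = ψ'² + ωψ² - ψ^{p+1}` over `(0, ∞)` yields `∫ ψ'² + ω ψ² - ψ^{p+1} = (γ/2) ψ(0)²`,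
which is `K_ω(φ_ω) = 0` after doubling by evenness; adding the integrated first integral
gives `P(φ_ω) = 0`. -/

namespace Real

theorem one_sub_tanh_sq (x : ℝ) : 1 - tanh x ^ 2 = (cosh x ^ 2)⁻¹ := by
  rw [tanh_eq_sinh_div_cosh, div_pow, sinh_sq]
  field_simp
  ring

theorem hasDerivAt_tanh (x : ℝ) : HasDerivAt tanh (1 - tanh x ^ 2) x := by
  have h := (hasDerivAt_sinh x).div (hasDerivAt_cosh x) (cosh_pos x).ne'
  rw [show tanh = fun y => sinh y / cosh y from funext tanh_eq_sinh_div_cosh]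
  refine h.congr_deriv ?_
  rw [div_pow, ← sq, ← sq, cosh_sq]
  field_simp

theorem one_sub_tanh_sq_pos (x : ℝ) : 0 < 1 - tanh x ^ 2 := sub_pos.2 (tanh_sq_lt_one x)

theorem one_sub_tanh_sq_le_exp (x : ℝ) : 1 - tanh x ^ 2 ≤ 4 * exp (-(2 * x)) := by
  have hcosh : exp x ≤ 2 * cosh x := by rw [cosh_eq]; linarith [exp_pos (-x)]
  have hexp : exp (-(2 * x)) = (exp x ^ 2)⁻¹ := by rw [exp_neg, ← exp_nat_mul]; norm_num
  rw [one_sub_tanh_sq, hexp, ← div_eq_mul_inv, inv_eq_one_div,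
    div_le_div_iff₀ (by positivity) (by positivity)]
  nlinarith [exp_pos x]

end Real

theorem artanh_eq_real_artanh {x : ℝ} (hx : x ∈ Icc (-1) 1) : artanh x = Real.artanh x := by
  rw [Real.artanh_eq_half_log hx, artanh]
  ring

namespace DeltaNLS

open Real hiding artanh
open Filter Topology

variable {γ p ω : ℝ}

def phase (γ p ω x : ℝ) : ℝ := (p - 1) * √ω / 2 * x + artanh (γ / (2 * √ω))

def profile (γ p ω x : ℝ) : ℝ :=
  ((p + 1) * ω / 2 * (1 - tanh (phase γ p ω x) ^ 2)) ^ (1 / (p - 1))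

def profileDeriv (γ p ω x : ℝ) : ℝ := -√ω * tanh (phase γ p ω x) * profile γ p ω x

theorem phi_eq_profile_abs (x : ℝ) : phi γ p ω x = profile γ p ω |x| := by
  simp only [phi, profile, phase, one_sub_tanh_sq, one_div, inv_pow]

theorem profile_pos (hp : 1 < p) (hω : 0 < ω) (x : ℝ) : 0 < profile γ p ω x := by
  have hsech := one_sub_tanh_sq_pos (phase γ p ω x)
  have hA : 0 < (p + 1) * ω / 2 := by nlinarith
  unfold profile
  positivity

theorem profile_rpow_sub_one (hp : 1 < p) (hω : 0 < ω) (x : ℝ) :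
    profile γ p ω x ^ (p - 1) = (p + 1) * ω / 2 * (1 - tanh (phase γ p ω x) ^ 2) := by
  have hsech := one_sub_tanh_sq_pos (phase γ p ω x)
  have hA : 0 < (p + 1) * ω / 2 := by nlinarith
  rw [profile, ← rpow_mul (by positivity), one_div_mul_cancel (by linarith), rpow_one]

theorem profile_rpow_add_one (hp : 1 < p) (hω : 0 < ω) (x : ℝ) :
    profile γ p ω x ^ (p + 1) =
      (p + 1) * ω / 2 * (1 - tanh (phase γ p ω x) ^ 2) * profile γ p ω x ^ 2 := by
  have h : profile γ p ω x ^ (p + 1) = profile γ p ω x ^ (p - 1) * profile γ p ω x ^ 2 := by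
    rw [← rpow_natCast, ← rpow_add (profile_pos hp hω x)]
    congr 1
    push_cast
    ring
  rw [h, profile_rpow_sub_one hp hω]

theorem hasDerivAt_phase (γ p ω x : ℝ) : HasDerivAt (phase γ p ω) ((p - 1) * √ω / 2) x := by
  unfold phase
  simpa using ((hasDerivAt_id x).const_mul ((p - 1) * √ω / 2)).add_const
    (artanh (γ / (2 * √ω)))

theorem hasDerivAt_profile (hp : 1 < p) (hω : 0 < ω) (x : ℝ) :
    HasDerivAt (profile γ p ω) (profileDeriv γ p ω x) x := by
  have hsech := one_sub_tanh_sq_pos (phase γ p ω x)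
  have hA : 0 < (p + 1) * ω / 2 := by nlinarith
  have h := ((((hasDerivAt_tanh _).comp x (hasDerivAt_phase γ p ω x)).pow 2).const_sub 1).const_mul
    ((p + 1) * ω / 2) |>.rpow_const (p := 1 / (p - 1)) (Or.inl (by positivity))
  refine h.congr_deriv ?_
  simp only [Function.comp, Pi.pow_apply]
  rw [rpow_sub_one (by positivity), profileDeriv, profile]
  have hp₁ : p - 1 ≠ 0 := by linarith
  field_simp
  ring

theorem continuous_profile (hp : 1 < p) (hω : 0 < ω) : Continuous (profile γ p ω) :=
  continuous_iff_continuousAt.2 fun x => (hasDerivAt_profile hp hω x).continuousAt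

theorem hasDerivAt_profileDeriv (hp : 1 < p) (hω : 0 < ω) (x : ℝ) :
    HasDerivAt (profileDeriv γ p ω) (ω * profile γ p ω x - profile γ p ω x ^ p) x := by
  have h := (((hasDerivAt_tanh _).comp x (hasDerivAt_phase γ p ω x)).const_mul (-√ω)).mul
    (hasDerivAt_profile (γ := γ) hp hω x)
  refine h.congr_deriv ?_
  have hψ := profile_pos (γ := γ) hp hω x
  have hpow : profile γ p ω x ^ p = profile γ p ω x ^ (p - 1) * profile γ p ω x := by
    rw [← rpow_add_one hψ.ne']
    ring_nf
  rw [hpow, profile_rpow_sub_one hp hω, profileDeriv]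
  simp only [Function.comp]
  -- both sides are polynomials in `√ω`, `tanh` and `ψ` that agree modulo `√ω ^ 2 = ω`
  linear_combination ((p + 1) / 2 * tanh (phase γ p ω x) ^ 2 - (p - 1) / 2) * profile γ p ω x *
    sq_sqrt hω.le

theorem profileDeriv_sq (hp : 1 < p) (hω : 0 < ω) (x : ℝ) :
    profileDeriv γ p ω x ^ 2 =
      ω * profile γ p ω x ^ 2 - 2 / (p + 1) * profile γ p ω x ^ (p + 1) := by
  have hp₁ : p + 1 ≠ 0 := by linarith
  rw [profile_rpow_add_one hp hω, profileDeriv, mul_pow, mul_pow, neg_sq, sq_sqrt hω.le]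
  field_simp
  ring

theorem hasDerivAt_profile_mul_profileDeriv (hp : 1 < p) (hω : 0 < ω) (x : ℝ) :
    HasDerivAt (fun y => profile γ p ω y * profileDeriv γ p ω y)
      (profileDeriv γ p ω x ^ 2 + ω * profile γ p ω x ^ 2 - profile γ p ω x ^ (p + 1)) x := by
  refine ((hasDerivAt_profile hp hω x).mul (hasDerivAt_profileDeriv hp hω x)).congr_deriv ?_
  rw [rpow_add_one (profile_pos hp hω x).ne']
  ring

theorem abs_profileDeriv_le (hp : 1 < p) (hω : 0 < ω) (x : ℝ) :
    |profileDeriv γ p ω x| ≤ √ω * profile γ p ω x := by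
  rw [profileDeriv, abs_mul, abs_mul, abs_neg, abs_of_nonneg (sqrt_nonneg ω),
    abs_of_pos (profile_pos hp hω x)]
  exact mul_le_mul_of_nonneg_right
    (mul_le_of_le_one_right (sqrt_nonneg ω) (abs_tanh_lt_one _).le) (profile_pos hp hω x).le

theorem profile_le_exp (hp : 1 < p) (hω : 0 < ω) :
    ∃ C, ∀ x, profile γ p ω x ≤ C * exp (-√ω * x) := by
  have hA : 0 < (p + 1) * ω / 2 := by nlinarith
  have hp₁ : p - 1 ≠ 0 := by linarith
  refine ⟨(4 * ((p + 1) * ω / 2)) ^ (1 / (p - 1)) *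
    exp (-(2 * artanh (γ / (2 * √ω))) / (p - 1)), fun x => ?_⟩
  calc profile γ p ω x
      ≤ ((p + 1) * ω / 2 * (4 * exp (-(2 * phase γ p ω x)))) ^ (1 / (p - 1)) := by
        refine rpow_le_rpow ?_ ?_ (by positivity)
        · exact mul_nonneg hA.le (one_sub_tanh_sq_pos _).le
        · exact mul_le_mul_of_nonneg_left (one_sub_tanh_sq_le_exp _) hA.le
    _ = _ := by
        rw [← mul_assoc, mul_comm _ (4 : ℝ), mul_rpow (by positivity) (exp_pos _).le,
          ← exp_mul, mul_assoc, ← exp_add, phase]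
        congr 2
        field_simp
        ring

theorem tendsto_profile_atTop (hp : 1 < p) (hω : 0 < ω) :
    Tendsto (profile γ p ω) atTop (𝓝 0) := by
  obtain ⟨C, hC⟩ := profile_le_exp (γ := γ) hp hω
  have hexp : Tendsto (fun x => C * exp (-√ω * x)) atTop (𝓝 0) := by
    simpa using (tendsto_exp_comp_nhds_zero.2
      (tendsto_id.const_mul_atTop_of_neg (neg_lt_zero.2 (sqrt_pos.2 hω)))).const_mul C
  exact tendsto_of_tendsto_of_tendsto_of_le_of_le tendsto_const_nhds hexp
    (fun x => (profile_pos hp hω x).le) hC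

theorem tendsto_profile_mul_profileDeriv_atTop (hp : 1 < p) (hω : 0 < ω) :
    Tendsto (fun x => profile γ p ω x * profileDeriv γ p ω x) atTop (𝓝 0) := by
  have h := ((tendsto_profile_atTop (γ := γ) hp hω).pow 2).const_mul √ω
  rw [zero_pow two_ne_zero, mul_zero] at h
  refine squeeze_zero_norm (fun x => ?_) h
  rw [norm_mul, norm_of_nonneg (profile_pos hp hω x).le, norm_eq_abs]
  nlinarith [abs_profileDeriv_le (γ := γ) hp hω x, profile_pos (γ := γ) hp hω x]

theorem integrableOn_profile_sq (hp : 1 < p) (hω : 0 < ω) :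
    IntegrableOn (fun x => profile γ p ω x ^ 2) (Ioi 0) := by
  obtain ⟨C, hC⟩ := profile_le_exp (γ := γ) hp hω
  refine Integrable.mono' ((exp_neg_integrableOn_Ioi 0 (by positivity : 0 < 2 * √ω)).const_mul
    (C ^ 2)) ((continuous_profile hp hω).pow 2).aestronglyMeasurable.restrict
    (ae_of_all _ fun x => ?_)
  calc ‖profile γ p ω x ^ 2‖ ≤ (C * exp (-√ω * x)) ^ 2 := by
        rw [norm_pow, norm_of_nonneg (profile_pos hp hω x).le]
        exact pow_le_pow_left₀ (profile_pos hp hω x).le (hC x) 2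
    _ = C ^ 2 * exp (-(2 * √ω) * x) := by
        rw [mul_pow, ← exp_nat_mul]
        ring_nf

theorem integrableOn_profile_rpow_add_one (hp : 1 < p) (hω : 0 < ω) :
    IntegrableOn (fun x => profile γ p ω x ^ (p + 1)) (Ioi 0) := by
  refine Integrable.mono' ((integrableOn_profile_sq (γ := γ) hp hω).const_mul ((p + 1) * ω / 2))
    ((continuous_profile hp hω).rpow_const
      fun x => Or.inl (profile_pos hp hω x).ne').aestronglyMeasurable.restrict
    (ae_of_all _ fun x => ?_)
  rw [norm_of_nonneg (rpow_nonneg (profile_pos hp hω x).le _), profile_rpow_add_one hp hω]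
  have hA : 0 < (p + 1) * ω / 2 := by nlinarith
  exact mul_le_mul_of_nonneg_right
    (mul_le_of_le_one_right hA.le (by nlinarith [sq_nonneg (tanh (phase γ p ω x))])) (sq_nonneg _)

theorem integrableOn_profileDeriv_sq (hp : 1 < p) (hω : 0 < ω) :
    IntegrableOn (fun x => profileDeriv γ p ω x ^ 2) (Ioi 0) := by
  simp_rw [profileDeriv_sq hp hω]
  exact ((integrableOn_profile_sq hp hω).const_mul ω).sub
    ((integrableOn_profile_rpow_add_one hp hω).const_mul _)

theorem tanh_phase_zero (hω : γ ^ 2 / 4 < ω) : tanh (phase γ p ω 0) = γ / (2 * √ω) := by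
  have hω₀ : 0 < ω := lt_of_le_of_lt (by positivity) hω
  have hs : 0 < √ω := sqrt_pos.2 hω₀
  obtain ⟨hlo, hhi⟩ := abs_lt_of_sq_lt_sq' (a := γ) (b := 2 * √ω)
    (by rw [mul_pow, sq_sqrt hω₀.le]; linarith) (by positivity)
  have hm : γ / (2 * √ω) ∈ Ioo (-1) 1 :=
    ⟨by rw [lt_div_iff₀ (by positivity)]; linarith, by rw [div_lt_one (by positivity)]; linarith⟩
  rw [phase, mul_zero, zero_add, artanh_eq_real_artanh (Ioo_subset_Icc_self hm),
    Real.tanh_artanh hm]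

theorem profileDeriv_zero (hω : γ ^ 2 / 4 < ω) :
    profileDeriv γ p ω 0 = -(γ / 2) * profile γ p ω 0 := by
  have hs : 0 < √ω := sqrt_pos.2 (lt_of_le_of_lt (by positivity) hω)
  rw [profileDeriv, tanh_phase_zero hω]
  field_simp

theorem integral_Ioi_profile_nehari (hp : 1 < p) (hω : γ ^ 2 / 4 < ω) :
    (∫ x in Ioi 0, profileDeriv γ p ω x ^ 2) + ω * (∫ x in Ioi 0, profile γ p ω x ^ 2)
      - (∫ x in Ioi 0, profile γ p ω x ^ (p + 1)) = γ / 2 * profile γ p ω 0 ^ 2 := by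
  have hω₀ : 0 < ω := lt_of_le_of_lt (by positivity) hω
  have hG := integrableOn_profileDeriv_sq (γ := γ) hp hω₀
  have hL := (integrableOn_profile_sq (γ := γ) hp hω₀).const_mul ω
  have hN := integrableOn_profile_rpow_add_one (γ := γ) hp hω₀
  have hGL : IntegrableOn (fun x => profileDeriv γ p ω x ^ 2 + ω * profile γ p ω x ^ 2) (Ioi 0) :=
    hG.add hL
  have hFTC := integral_Ioi_of_hasDerivAt_of_tendsto'
    (fun x _ => hasDerivAt_profile_mul_profileDeriv hp hω₀ x) (hGL.sub hN)
    (tendsto_profile_mul_profileDeriv_atTop hp hω₀)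
  rw [integral_sub hGL hN, integral_add hG hL, integral_const_mul] at hFTC
  rw [hFTC, profileDeriv_zero hω]
  ring

theorem integral_Ioi_profileDeriv_sq (hp : 1 < p) (hω : 0 < ω) :
    ∫ x in Ioi 0, profileDeriv γ p ω x ^ 2 =
      ω * (∫ x in Ioi 0, profile γ p ω x ^ 2)
        - 2 / (p + 1) * ∫ x in Ioi 0, profile γ p ω x ^ (p + 1) := by
  simp_rw [profileDeriv_sq hp hω]
  rw [integral_sub ((integrableOn_profile_sq hp hω).const_mul ω)
    ((integrableOn_profile_rpow_add_one hp hω).const_mul _), integral_const_mul, integral_const_mul]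

theorem norm_phiC (hp : 1 < p) (hω : 0 < ω) (x : ℝ) : ‖phiC γ p ω x‖ = profile γ p ω |x| := by
  rw [phiC, Complex.norm_real, phi_eq_profile_abs, norm_of_nonneg (profile_pos hp hω _).le]

theorem norm_deriv_phiC_sq (hp : 1 < p) (hω : 0 < ω) {x : ℝ} (hx : x ≠ 0) :
    ‖deriv (phiC γ p ω) x‖ ^ 2 = profileDeriv γ p ω |x| ^ 2 := by
  have hphiC : phiC γ p ω = fun y => ((profile γ p ω |y| : ℝ) : ℂ) := by
    ext y
    rw [phiC, phi_eq_profile_abs]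
  have hd : HasDerivAt (fun y => ((profile γ p ω |y| : ℝ) : ℂ))
      ((profileDeriv γ p ω |x| * SignType.sign x : ℝ) : ℂ) x :=
    ((hasDerivAt_profile hp hω |x|).comp x (hasDerivAt_abs hx)).ofReal_comp
  rw [hphiC, hd.deriv, Complex.norm_real, norm_mul, mul_pow]
  rcases hx.lt_or_gt with h | h <;> simp [h]

theorem gradSq_phiC (hp : 1 < p) (hω : 0 < ω) :
    gradSq (phiC γ p ω) = 2 * ∫ x in Ioi 0, profileDeriv γ p ω x ^ 2 := by
  rw [gradSq, integral_congr_ae ((Measure.ae_ne volume 0).mono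
    fun x hx => norm_deriv_phiC_sq hp hω hx)]
  exact integral_comp_abs (f := fun t => profileDeriv γ p ω t ^ 2)

theorem l2Sq_phiC (hp : 1 < p) (hω : 0 < ω) :
    l2Sq (phiC γ p ω) = 2 * ∫ x in Ioi 0, profile γ p ω x ^ 2 := by
  simp only [l2Sq, norm_phiC hp hω]
  exact integral_comp_abs (f := fun t => profile γ p ω t ^ 2)

theorem lpPow_phiC (hp : 1 < p) (hω : 0 < ω) :
    lpPow p (phiC γ p ω) = 2 * ∫ x in Ioi 0, profile γ p ω x ^ (p + 1) := by
  simp only [lpPow, norm_phiC hp hω]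
  exact integral_comp_abs (f := fun t => profile γ p ω t ^ (p + 1))

end DeltaNLS

open DeltaNLS in
theorem stmt13_general (γ p ω : ℝ) (hp : 1 < p) (hω : γ ^ 2 / 4 < ω) :
    Kfun γ p ω (phiC γ p ω) = 0 ∧ Pfun γ p (phiC γ p ω) = 0 := by
  have hω₀ : 0 < ω := lt_of_le_of_lt (by positivity) hω
  have hNehari := integral_Ioi_profile_nehari hp hω
  have hEnergy := integral_Ioi_profileDeriv_sq (γ := γ) hp hω₀
  rw [Kfun, Pfun, gradSq_phiC hp hω₀, l2Sq_phiC hp hω₀, lpPow_phiC hp hω₀, norm_phiC hp hω₀,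
    abs_zero]
  refine ⟨by linear_combination 2 * hNehari, ?_⟩
  have hp₁ : p + 1 ≠ 0 := by linarith
  field_simp at hEnergy ⊢
  linear_combination 2 * ((p + 1) * hNehari + hEnergy)

/-- the Nehari and Pohozaev identities for `φ_ω`. -/
theorem stmt13 (γ p ω : ℝ) (hγ : 0 < γ) (hp : 1 < p) (hω : γ ^ 2 / 4 < ω) :
    Kfun γ p ω (phiC γ p ω) = 0 ∧ Pfun γ p (phiC γ p ω) = 0 :=
  stmt13_general γ p ω hp hω
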